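/- A generalized bitopological space (X, μ1, μ2) is pairwise T_{5/8} if and only if every subset of X is pairwise λ-closed. -/

import Mathlib

open Set

/-- A generalized topology on `X`: contains `∅` and is closed under arbitrary unions. -/
def IsGenTop {X : Type*} (μ : Set (Set X)) : Prop :=
  ∅ ∈ μ ∧ ∀ S ⊆ μ, ⋃₀ S ∈ μ

/-- `A` is μ-closed iff its complement is μ-open. -/
def gClosedSet {X : Type*} (μ : Set (Set X)) (A : Set X) : Prop := Aᶜ ∈ μ

/-- μ-closure: intersection of all μ-closed sets containing `A`. -/
def gCl {X : Type*} (μ : Set (Set X)) (A : Set X) : Set X :=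
  ⋂₀ {F | gClosedSet μ F ∧ A ⊆ F}

/-- `A^∧_μ`: intersection of all μ-open sets containing `A`. -/
def wedgeOp {X : Type*} (μ : Set (Set X)) (A : Set X) : Set X :=
  ⋂₀ {U | U ∈ μ ∧ A ⊆ U}

/-- `A^∨_μ`: union of all μ-closed sets contained in `A`. -/
def veeOp {X : Type*} (μ : Set (Set X)) (A : Set X) : Set X :=
  ⋃₀ {F | gClosedSet μ F ∧ F ⊆ A}

/-- `L` is a `∧_μ`-set. -/
def IsWedgeSet {X : Type*} (μ : Set (Set X)) (L : Set X) : Prop := L = wedgeOp μ L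

/-- `M` is a `∨_μ`-set. -/
def IsVeeSet {X : Type*} (μ : Set (Set X)) (M : Set X) : Prop := M = veeOp μ M

/-- `A` is `g_{μi}`-closed with respect to `μj`. -/
def GClosedWrt {X : Type*} (μi μj : Set (Set X)) (A : Set X) : Prop :=
  ∀ U ∈ μj, A ⊆ U → gCl μi A ⊆ U

/-- `A` is `g_{μi}`-open with respect to `μj`. -/
def GOpenWrt {X : Type*} (μi μj : Set (Set X)) (A : Set X) : Prop :=
  GClosedWrt μi μj Aᶜ

/-- `A` is `λ_{μi}`-closed with respect to `μj`. -/
def LamClosedWrt {X : Type*} (μi μj : Set (Set X)) (A : Set X) : Prop :=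
  ∃ F L : Set X, gClosedSet μi F ∧ IsWedgeSet μj L ∧ A = F ∩ L

/-- `A` is `λ_{μi}`-open with respect to `μj`. -/
def LamOpenWrt {X : Type*} (μi μj : Set (Set X)) (A : Set X) : Prop :=
  LamClosedWrt μi μj Aᶜ

/-- `A` is pairwise `λ`-closed. -/
def PairwiseLamClosed {X : Type*} (μ1 μ2 : Set (Set X)) (A : Set X) : Prop :=
  ∃ F1 F2 L1 L2 : Set X, gClosedSet μ1 F1 ∧ gClosedSet μ2 F2 ∧
    IsWedgeSet μ1 L1 ∧ IsWedgeSet μ2 L2 ∧ A = (F1 ∩ F2) ∩ (L1 ∩ L2)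

def PairwiseT0 {X : Type*} (μ1 μ2 : Set (Set X)) : Prop :=
  ∀ x y : X, x ≠ y →
    (∃ U ∈ μ1, x ∈ U ∧ y ∉ U) ∨ (∃ V ∈ μ2, y ∈ V ∧ x ∉ V)

def PairwiseT1 {X : Type*} (μ1 μ2 : Set (Set X)) : Prop :=
  ∀ x y : X, x ≠ y →
    (∃ U ∈ μ1, x ∈ U ∧ y ∉ U) ∧ (∃ V ∈ μ2, y ∈ V ∧ x ∉ V)

def PairwiseSymmetric {X : Type*} (μ1 μ2 : Set (Set X)) : Prop :=
  ∀ x y : X, (x ∈ gCl μ1 {y} → y ∈ gCl μ2 {x}) ∧ (x ∈ gCl μ2 {y} → y ∈ gCl μ1 {x})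

def PairwiseTHalf {X : Type*} (μ1 μ2 : Set (Set X)) : Prop :=
  (∀ A : Set X, GClosedWrt μ1 μ2 A → gClosedSet μ1 A) ∧
  (∀ A : Set X, GClosedWrt μ2 μ1 A → gClosedSet μ2 A)

def PairwiseR0 {X : Type*} (μ1 μ2 : Set (Set X)) : Prop :=
  (∀ G ∈ μ1, ∀ x ∈ G, gCl μ2 {x} ⊆ G) ∧ (∀ G ∈ μ2, ∀ x ∈ G, gCl μ1 {x} ⊆ G)

def PairwiseLamSymmetric {X : Type*} (μ1 μ2 : Set (Set X)) : Prop :=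
  ∀ A : Set X, PairwiseLamClosed μ1 μ2 A →
    LamClosedWrt μ1 μ2 A ∧ LamClosedWrt μ2 μ1 A

/-- `A` and `B` are μ-weakly separated. -/
def MuWeaklySeparated {X : Type*} (μ : Set (Set X)) (A B : Set X) : Prop :=
  ∃ U ∈ μ, ∃ V ∈ μ, A ⊆ U ∧ B ⊆ V ∧ A ∩ V = ∅ ∧ B ∩ U = ∅

def PairwiseTQuarter {X : Type*} (μ1 μ2 : Set (Set X)) : Prop :=
  ∀ P : Set X, P.Finite → ∀ y ∉ P,
    ∃ A : Set X, P ⊆ A ∧ y ∉ A ∧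
      (A ∈ μ1 ∨ A ∈ μ2 ∨ gClosedSet μ1 A ∨ gClosedSet μ2 A)

def PairwiseTThreeEighths {X : Type*} (μ1 μ2 : Set (Set X)) : Prop :=
  ∀ P : Set X, P.Countable → ∀ y ∉ P,
    ∃ A : Set X, P ⊆ A ∧ y ∉ A ∧
      (A ∈ μ1 ∨ A ∈ μ2 ∨ gClosedSet μ1 A ∨ gClosedSet μ2 A)

def PairwiseTFiveEighths {X : Type*} (μ1 μ2 : Set (Set X)) : Prop :=
  ∀ P : Set X, ∀ y ∉ P,
    ∃ A : Set X, P ⊆ A ∧ y ∉ A ∧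
      (A ∈ μ1 ∨ A ∈ μ2 ∨ gClosedSet μ1 A ∨ gClosedSet μ2 A)

/-!
Both conditions say that every `P` equals the intersection of its μ1- and μ2-closures and its
`∧_{μ1}`- and `∧_{μ2}`-kernels. For `T_{5/8}` this is a pointwise restatement: a point outside
that intersection is exactly a point separated from `P` by a set of one of the four kinds. For
`λ`-closedness, those four sets are themselves μ-closed and `∧`-sets, and they lie inside any
`F1 ∩ F2 ∩ L1 ∩ L2` containing `P`.
-/

section GenTop

variable {X : Type*} {μ : Set (Set X)} {A B : Set X} {x : X}

lemma mem_gCl_iff : x ∈ gCl μ A ↔ ∀ F, gClosedSet μ F → A ⊆ F → x ∈ F := by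
  simp only [gCl, mem_sInter, mem_ofPred_eq, and_imp]

lemma mem_wedgeOp_iff : x ∈ wedgeOp μ A ↔ ∀ U ∈ μ, A ⊆ U → x ∈ U := by
  simp only [wedgeOp, mem_sInter, mem_ofPred_eq, and_imp]

lemma subset_gCl : A ⊆ gCl μ A :=
  fun _ hx _ hF => hF.2 hx

lemma subset_wedgeOp : A ⊆ wedgeOp μ A :=
  fun _ hx _ hU => hU.2 hx

lemma gCl_subset (hB : gClosedSet μ B) (hAB : A ⊆ B) : gCl μ A ⊆ B :=
  fun _ hx => mem_gCl_iff.mp hx B hB hAB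

lemma wedgeOp_mono (hAB : A ⊆ B) : wedgeOp μ A ⊆ wedgeOp μ B :=
  fun _ hx U hU => hx U ⟨hU.1, hAB.trans hU.2⟩

lemma gClosedSet_sInter (hμ : IsGenTop μ) {S : Set (Set X)} (hS : ∀ F ∈ S, gClosedSet μ F) :
    gClosedSet μ (⋂₀ S) := by
  rw [gClosedSet, compl_sInter]
  exact hμ.2 _ (by rintro _ ⟨F, hF, rfl⟩; exact hS F hF)

lemma gClosedSet_gCl (hμ : IsGenTop μ) (A : Set X) : gClosedSet μ (gCl μ A) :=
  gClosedSet_sInter hμ fun _ hF => hF.1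

lemma isWedgeSet_wedgeOp (μ : Set (Set X)) (A : Set X) : IsWedgeSet μ (wedgeOp μ A) :=
  subset_antisymm subset_wedgeOp fun _ hx U hU => hx U ⟨hU.1, fun _ hz => hz U hU⟩

lemma IsWedgeSet.wedgeOp_subset (hB : IsWedgeSet μ B) (hAB : A ⊆ B) : wedgeOp μ A ⊆ B :=
  hB ▸ wedgeOp_mono hAB

end GenTop

section Pairwise

variable {X : Type*} {μ1 μ2 : Set (Set X)} {P : Set X}

/-- The least pairwise `λ`-closed set containing `P` (when `μ1`, `μ2` are generalized
topologies). -/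
def pairwiseLamHull (μ1 μ2 : Set (Set X)) (P : Set X) : Set X :=
  (gCl μ1 P ∩ gCl μ2 P) ∩ (wedgeOp μ1 P ∩ wedgeOp μ2 P)

lemma subset_pairwiseLamHull : P ⊆ pairwiseLamHull μ1 μ2 P :=
  fun _ hx => ⟨⟨subset_gCl hx, subset_gCl hx⟩, subset_wedgeOp hx, subset_wedgeOp hx⟩

lemma mem_pairwiseLamHull_iff {y : X} :
    y ∈ pairwiseLamHull μ1 μ2 P ↔ ∀ A, P ⊆ A →
      (A ∈ μ1 ∨ A ∈ μ2 ∨ gClosedSet μ1 A ∨ gClosedSet μ2 A) → y ∈ A := by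
  simp only [pairwiseLamHull, mem_inter_iff, mem_gCl_iff, mem_wedgeOp_iff]
  constructor
  · rintro ⟨⟨hF1, hF2⟩, hU1, hU2⟩ A hPA (hA | hA | hA | hA)
    exacts [hU1 A hA hPA, hU2 A hA hPA, hF1 A hA hPA, hF2 A hA hPA]
  · intro h
    exact ⟨⟨fun F hF hPF => h F hPF (by tauto), fun F hF hPF => h F hPF (by tauto)⟩,
      fun U hU hPU => h U hPU (by tauto), fun U hU hPU => h U hPU (by tauto)⟩

lemma pairwiseTFiveEighths_iff_pairwiseLamHull_subset :
    PairwiseTFiveEighths μ1 μ2 ↔ ∀ P : Set X, pairwiseLamHull μ1 μ2 P ⊆ P := by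
  refine forall_congr' fun P => ⟨fun h y hy => ?_, fun h y hyP => ?_⟩
  · by_contra hyP
    obtain ⟨A, hPA, hyA, hA⟩ := h y hyP
    exact hyA (mem_pairwiseLamHull_iff.mp hy A hPA hA)
  · by_contra hsep
    exact hyP (h (mem_pairwiseLamHull_iff.mpr fun A hPA hA =>
      by_contra fun hyA => hsep ⟨A, hPA, hyA, hA⟩))

lemma pairwiseLamClosed_iff_pairwiseLamHull_subset (h1 : IsGenTop μ1) (h2 : IsGenTop μ2) :
    PairwiseLamClosed μ1 μ2 P ↔ pairwiseLamHull μ1 μ2 P ⊆ P := by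
  constructor
  · rintro ⟨F1, F2, L1, L2, hF1, hF2, hL1, hL2, rfl⟩
    exact inter_subset_inter
      (inter_subset_inter (gCl_subset hF1 fun _ hx => hx.1.1) (gCl_subset hF2 fun _ hx => hx.1.2))
      (inter_subset_inter (hL1.wedgeOp_subset fun _ hx => hx.2.1)
        (hL2.wedgeOp_subset fun _ hx => hx.2.2))
  · intro h
    exact ⟨_, _, _, _, gClosedSet_gCl h1 P, gClosedSet_gCl h2 P, isWedgeSet_wedgeOp μ1 P,
      isWedgeSet_wedgeOp μ2 P, (h.antisymm subset_pairwiseLamHull).symm⟩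

end Pairwise

theorem stmt18 {X : Type*} (μ1 μ2 : Set (Set X))
    (h1 : IsGenTop μ1) (h2 : IsGenTop μ2) :
    PairwiseTFiveEighths μ1 μ2 ↔
      ∀ P : Set X, PairwiseLamClosed μ1 μ2 P := by
  rw [pairwiseTFiveEighths_iff_pairwiseLamHull_subset]
  exact forall_congr' fun P => (pairwiseLamClosed_iff_pairwiseLamHull_subset h1 h2).symm
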